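/- Dual integration by parts: if d is a derivation on a commutative ring R, then for any family (f_j)_{0≤j≤k} and any g ∈ R, Σ_{j=0}^{k} (−1)^j d^j(f_j · g) = Σ_{j=0}^{k} η(f)_j · d^j(g), where η(f)_m = Σ_{j=0}^{k−m} (−1)^{m+j} ((m+j) choose j) d^j(f_{m+j}). -/
import Mathlib


section
variable {R : Type*} [CommRing R] (d : R → R)
  (hadd : ∀ a b : R, d (a + b) = d a + d b)
  (hleib : ∀ a b : R, d (a * b) = d a * b + a * d b)

include hadd in
private lemma iter_add (n : ℕ) (a b : R) :
    d^[n] (a + b) = d^[n] a + d^[n] b := by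
  induction n generalizing a b with
  | zero => simp
  | succ n ih =>
      rw [Function.iterate_succ_apply, Function.iterate_succ_apply,
        Function.iterate_succ_apply, hadd, ih]

include hadd hleib in
private lemma iter_leibniz (n : ℕ) (a b : R) :
    d^[n] (a * b) = ∑ i ∈ Finset.range (n + 1),
      ((n.choose i : ℤ)) • (d^[i] a * d^[n - i] b) := by
  induction n generalizing a b with
  | zero => simp
  | succ n ih =>
      rw [Function.iterate_succ_apply, hleib, iter_add d hadd, ih, ih]
      simp only [← Function.iterate_succ_apply]
      -- rewrite the RHS using `sum_range_succ'`
      rw [Finset.sum_range_succ'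
        (fun i => (((n+1).choose i : ℤ)) • (d^[i] a * d^[n + 1 - i] b)) (n+1)]
      simp only [Nat.succ_sub_succ, Nat.choose_succ_succ, Nat.cast_add, add_smul,
        Finset.sum_add_distrib, Nat.choose_zero_right, Nat.cast_one, one_smul,
        Function.iterate_zero_apply, Nat.sub_zero]
      simp only [Nat.succ_eq_add_one]
      have e2 : ∑ i ∈ Finset.range (n+1), ((n.choose i : ℤ)) • (d^[i] a * d^[n-i+1] b)
          = (∑ i ∈ Finset.range n, ((n.choose (i+1) : ℤ)) • (d^[i+1] a * d^[n-i] b))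
            + a * d^[n+1] b := by
        rw [Finset.sum_range_succ'
          (fun i => ((n.choose i : ℤ)) • (d^[i] a * d^[n-i+1] b)) n]
        simp only [Nat.choose_zero_right, Nat.cast_one, one_smul,
          Function.iterate_zero_apply, Nat.sub_zero]
        congr 1
        apply Finset.sum_congr rfl
        intro i hi
        have h : n - (i+1) + 1 = n - i := by
          have := Finset.mem_range.mp hi; omega
        rw [h]
      have e1 : ∑ i ∈ Finset.range (n+1), ((n.choose (i+1) : ℤ)) • (d^[i+1] a * d^[n-i] b)
          = ∑ i ∈ Finset.range n, ((n.choose (i+1) : ℤ)) • (d^[i+1] a * d^[n-i] b) := by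
        rw [Finset.sum_range_succ]
        simp
      rw [e2, e1]
      ring
end

/-- The one-variable operator `η`:
`η(f)_m = Σ_{j=0}^{k−m} (−1)^{m+j} ((m+j) choose j) d^j(f_{m+j})`. -/
def eta1 {R : Type*} [CommRing R] (d : R → R) (k : ℕ) (f : ℕ → R) (m : ℕ) : R :=
  ∑ j ∈ Finset.range (k - m + 1),
    ((-1 : ℤ) ^ (m + j) * (Nat.choose (m + j) j : ℤ)) • d^[j] (f (m + j))

/-- dual integration by parts.  If `d` is a derivation on a commutative
ring `R`, then `Σ_{j=0}^{k} (−1)^j d^j(f_j · g) = Σ_{j=0}^{k} η(f)_j · d^j(g)`. -/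
theorem dual_integration_by_parts {R : Type*} [CommRing R] (d : R → R)
    (hadd : ∀ a b : R, d (a + b) = d a + d b)
    (hleib : ∀ a b : R, d (a * b) = d a * b + a * d b)
    (k : ℕ) (f : ℕ → R) (g : R) :
    ∑ j ∈ Finset.range (k + 1), ((-1 : ℤ) ^ j) • d^[j] (f j * g)
      = ∑ j ∈ Finset.range (k + 1), eta1 d k f j * d^[j] g := by
  have step1 : ∀ j, ((-1 : ℤ) ^ j) • d^[j] (f j * g)
      = ∑ m ∈ Finset.range (j + 1),
          ((-1 : ℤ) ^ j * (j.choose m : ℤ)) • (d^[j - m] (f j) * d^[m] g) := by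
    intro j
    rw [iter_leibniz d hadd hleib, Finset.smul_sum,
      ← Finset.sum_range_reflect
        (fun m => ((-1 : ℤ) ^ j * (j.choose m : ℤ)) • (d^[j - m] (f j) * d^[m] g)) (j+1)]
    apply Finset.sum_congr rfl
    intro i hi
    have hij : i ≤ j := by
      have := Finset.mem_range.mp hi; omega
    have h1 : j + 1 - 1 - i = j - i := by omega
    have h2 : j - (j - i) = i := by omega
    have h3 : j.choose (j - i) = j.choose i := Nat.choose_symm hij
    simp only [h1, h2, h3, smul_smul]
  simp only [step1]
  rw [Finset.sum_comm'
    (t' := Finset.range (k+1)) (s' := fun m => Finset.Ico m (k+1))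
    (by intro j m; simp only [Finset.mem_range, Finset.mem_Ico]; omega)]
  apply Finset.sum_congr rfl
  intro m hm
  have hmk : m ≤ k := by
    have := Finset.mem_range.mp hm; omega
  rw [Finset.sum_Ico_eq_sum_range, show k + 1 - m = k - m + 1 by omega,
    eta1, Finset.sum_mul]
  apply Finset.sum_congr rfl
  intro t _
  have h1 : m + t - m = t := by omega
  have h2 : (m + t).choose m = (m + t).choose t := by
    have := Nat.choose_symm (show t ≤ m + t by omega)
    rwa [Nat.add_sub_cancel] at this
  rw [h1, h2, smul_mul_assoc]
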